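/- arXiv:2111.08277 — 3 statements merged into one kernel-verified Lean document; each statement's English description precedes it below -/
import Mathlib

section
/- Let $x, h \in \mathbb{R}$, $\epsilon > 0$, and $s \in \mathbb{N}^+$ with $s\epsilon \geq 2(\epsilon + \Delta')$ and $|x - h| \leq \Delta'$. Define the random message $m$ as $(\lceil x/\epsilon\rceil \bmod s)$ with probability $x/\epsilon - \lfloor x/\epsilon\rfloor$ and $(\lfloor x/\epsilon\rfloor \bmod s)$ with probability $\lceil x/\epsilon\rceil - x/\epsilon$, and let $Q_M(x)$ be the point closest to $h$ in the set $\mathbb{Z}_{m,\epsilon} = \{(zs + m)\epsilon : z \in \mathbb{Z}\}$. Then $\mathbb{E}[Q_M(x)] = x$ and $|x - Q_M(x)| < \epsilon$ almost surely. -/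
/-!
Every integer `n` with `|n ε - x| < ε` is within `ε + Δ' ≤ s ε / 2` of `h`, while the other points
of its coset `n + sℤ` are at distance at least `s ε` from `n ε`; hence the decoder returns exactly
`n ε` from `n mod s`. Applied to `⌊x/ε⌋` and `⌈x/ε⌉` this gives the accuracy bound, and the
expectation becomes that of stochastic rounding of `x/ε`, which is `x/ε`.
-/

lemma Int.fract_mul_ceil_add_one_sub_fract_mul_floor {R : Type*} [CommRing R] [LinearOrder R]
    [FloorRing R] [IsStrictOrderedRing R] (y : R) :
    Int.fract y * ⌈y⌉ + (1 - Int.fract y) * ⌊y⌋ = y := by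
  rcases Int.fract_eq_zero_or_add_one_sub_ceil y with hfract | hfract
  · linear_combination ((⌈y⌉ : R) - ⌊y⌋ - 1) * hfract - Int.self_sub_floor y
  · linear_combination Int.fract y * hfract - (1 - Int.fract y) * Int.self_sub_floor y

section FloorDiv

variable {K : Type*} [Field K] [LinearOrder K] [IsStrictOrderedRing K] [FloorRing K] {x ε : K}

lemma abs_floor_div_mul_sub_lt (hε : 0 < ε) : |(⌊x / ε⌋ : K) * ε - x| < ε := by
  have hlower : (⌊x / ε⌋ : K) * ε ≤ x := (le_div_iff₀ hε).mp (Int.floor_le _)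
  have hupper : x < (⌊x / ε⌋ + 1 : K) * ε := (div_lt_iff₀ hε).mp (Int.lt_floor_add_one _)
  rw [abs_lt]
  constructor <;> linarith

lemma abs_ceil_div_mul_sub_lt (hε : 0 < ε) : |(⌈x / ε⌉ : K) * ε - x| < ε := by
  have hupper : x ≤ (⌈x / ε⌉ : K) * ε := (div_le_iff₀ hε).mp (Int.le_ceil _)
  have hlower : (⌈x / ε⌉ - 1 : K) * ε < x :=
    (lt_div_iff₀ hε).mp (sub_lt_iff_lt_add.mpr (Int.ceil_lt_add_one _))
  rw [abs_lt]
  constructor <;> linarith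

end FloorDiv

lemma Int.eq_zero_of_abs_mul_lt {R : Type*} [Ring R] [LinearOrder R] [IsStrictOrderedRing R]
    {k : ℤ} {a : R} (ha : 0 < a) (hk : |k * a| < a) : k = 0 := by
  rw [abs_mul, abs_of_pos ha] at hk
  exact Int.abs_lt_one_iff.mp (by exact_mod_cast (mul_lt_iff_lt_one_left ha).mp hk)

lemma dec_emod_eq_of_abs_sub_lt {s : ℕ} {ε h : ℝ} {dec : ℤ → ℝ}
    (hdec_mem : ∀ m : ℤ, ∃ z : ℤ, dec m = ((z * s + m : ℤ) : ℝ) * ε)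
    (hdec_closest : ∀ m z : ℤ, |dec m - h| ≤ |(((z * s + m : ℤ) : ℝ)) * ε - h|)
    {n : ℤ} (hn : |(n : ℝ) * ε - h| < s * ε / 2) :
    dec (n % s) = n * ε := by
  obtain ⟨z, hz⟩ := hdec_mem (n % s)
  have hdec_near : |dec (n % s) - h| ≤ |(n : ℝ) * ε - h| := by
    simpa only [Int.ediv_mul_add_emod] using hdec_closest (n % s) (n / s)
  have hdiff : dec (n % s) - n * ε = ((z - n / s : ℤ) : ℝ) * (s * ε) := by
    rw [hz]
    nth_rewrite 2 [← Int.ediv_mul_add_emod n s]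
    push_cast
    ring
  have hsε : 0 < (s : ℝ) * ε := by linarith [(abs_nonneg _).trans_lt hn]
  have hdiff_lt : |dec (n % s) - n * ε| < s * ε := by
    calc |dec (n % s) - n * ε| ≤ |dec (n % s) - h| + |h - n * ε| := abs_sub_le _ _ _
      _ < s * ε := by rw [abs_sub_comm h]; linarith
  rw [hdiff] at hdiff_lt
  have hk := Int.eq_zero_of_abs_mul_lt hsε hdiff_lt
  rwa [hk, Int.cast_zero, zero_mul, sub_eq_zero] at hdiff

theorem modulo_quantizer_unbiased_and_accurate_general
    (x h Δ' ε : ℝ) (s : ℕ) (hε : 0 < ε)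
    (hcond : (s : ℝ) * ε ≥ 2 * (ε + Δ')) (hdist : |x - h| ≤ Δ')
    (dec : ℤ → ℝ)
    (hdec_mem : ∀ m : ℤ, ∃ z : ℤ, dec m = ((z * s + m : ℤ) : ℝ) * ε)
    (hdec_closest : ∀ m z : ℤ, |dec m - h| ≤ |(((z * s + m : ℤ) : ℝ)) * ε - h|) :
    (x / ε - ⌊x / ε⌋) * dec (⌈x / ε⌉ % (s : ℤ))
        + (1 - (x / ε - ⌊x / ε⌋)) * dec (⌊x / ε⌋ % (s : ℤ)) = x ∧
    |x - dec (⌈x / ε⌉ % (s : ℤ))| < ε ∧ |x - dec (⌊x / ε⌋ % (s : ℤ))| < ε := by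
  have hrecover : ∀ n : ℤ, |(n : ℝ) * ε - x| < ε → dec (n % s) = n * ε := by
    intro n hn
    refine dec_emod_eq_of_abs_sub_lt hdec_mem hdec_closest ?_
    calc |(n : ℝ) * ε - h| ≤ |(n : ℝ) * ε - x| + |x - h| := abs_sub_le _ _ _
      _ < s * ε / 2 := by linarith
  have hceil := abs_ceil_div_mul_sub_lt (x := x) hε
  have hfloor := abs_floor_div_mul_sub_lt (x := x) hε
  rw [hrecover _ hceil, hrecover _ hfloor, abs_sub_comm x, abs_sub_comm x, Int.self_sub_floor]
  refine ⟨?_, hceil, hfloor⟩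
  calc Int.fract (x / ε) * (⌈x / ε⌉ * ε) + (1 - Int.fract (x / ε)) * (⌊x / ε⌋ * ε)
      = (Int.fract (x / ε) * ⌈x / ε⌉ + (1 - Int.fract (x / ε)) * ⌊x / ε⌋) * ε := by ring
    _ = x := by rw [Int.fract_mul_ceil_add_one_sub_fract_mul_floor, div_mul_cancel₀ x hε.ne']

/-- Modulo quantizer `Q_M` with side information `h`: the encoder stochastically rounds
`x/ε` to `⌈x/ε⌉` (with probability the fractional part `p = x/ε - ⌊x/ε⌋`) or `⌊x/ε⌋`
(with probability `1 - p`) and transmits the residue `m` mod `s`; the decoder `dec m`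
outputs the point of the coset `{(z·s + m)·ε : z ∈ ℤ}` closest to `h`.  If
`s·ε ≥ 2(ε + Δ')` and `|x - h| ≤ Δ'`, then the output is unbiased,
`E[Q_M(x)] = p·dec(⌈x/ε⌉ mod s) + (1-p)·dec(⌊x/ε⌋ mod s) = x`, and every realized
output is within `ε` of `x` (so `|x - Q_M(x)| < ε` almost surely). -/
theorem modulo_quantizer_unbiased_and_accurate
    (x h Δ' ε : ℝ) (s : ℕ) (hs : 1 ≤ s) (hε : 0 < ε)
    (hcond : (s : ℝ) * ε ≥ 2 * (ε + Δ')) (hdist : |x - h| ≤ Δ')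
    (dec : ℤ → ℝ)
    (hdec_mem : ∀ m : ℤ, ∃ z : ℤ, dec m = ((z * s + m : ℤ) : ℝ) * ε)
    (hdec_closest : ∀ m z : ℤ, |dec m - h| ≤ |(((z * s + m : ℤ) : ℝ)) * ε - h|) :
    (x / ε - ⌊x / ε⌋) * dec (⌈x / ε⌉ % (s : ℤ))
        + (1 - (x / ε - ⌊x / ε⌋)) * dec (⌊x / ε⌋ % (s : ℤ)) = x ∧
    |x - dec (⌈x / ε⌉ % (s : ℤ))| < ε ∧ |x - dec (⌊x / ε⌋ % (s : ℤ))| < ε :=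
  modulo_quantizer_unbiased_and_accurate_general x h Δ' ε s hε hcond hdist dec hdec_mem hdec_closest
end

section
/- Let $x, h \in \mathbb{R}$ with $|x - h| \leq \Delta'$, let $\epsilon > 0$ and $s \in \mathbb{N}^+$ satisfy $s\epsilon \geq 2(\epsilon + \Delta')$. Let $y \in \epsilon\mathbb{Z}$ be either $\epsilon\lfloor x/\epsilon\rfloor$ or $\epsilon\lceil x/\epsilon\rceil$ (so $|y - x| < \epsilon$). Then $y$ is the unique point of the coset $\{(zs + m)\epsilon : z \in \mathbb{Z}\}$ (where $m \equiv y/\epsilon \bmod s$) lying within distance $s\epsilon/2$ of $h$; consequently the decoder's output equals $y$. -/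
/-- Correctness of decoding in the modulo quantizer: let `|x - h| ≤ Δ'`,
`s·ε ≥ 2(ε + Δ')`, and let `y = k·ε` with `k = ⌊x/ε⌋` or `k = ⌈x/ε⌉` (so `|y - x| < ε`).
Then `y` lies in the coset `{(z·s + (k mod s))·ε : z ∈ ℤ}`, `y` is within distance
`s·ε/2` of `h`, and it is the unique such coset point; hence the decoder outputs `y`. -/
theorem modulo_quantizer_decoding_correct
    (x h Δ' ε : ℝ) (s : ℕ) (hs : 1 ≤ s) (hε : 0 < ε)
    (hcond : (s : ℝ) * ε ≥ 2 * (ε + Δ')) (hdist : |x - h| ≤ Δ')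
    (k : ℤ) (hk : k = ⌊x / ε⌋ ∨ k = ⌈x / ε⌉) (y : ℝ) (hy : y = (k : ℝ) * ε) :
    (∃ z : ℤ, y = ((z * s + k % (s : ℤ) : ℤ) : ℝ) * ε) ∧
    |y - h| ≤ (s : ℝ) * ε / 2 ∧
    ∀ z : ℤ, |((z * s + k % (s : ℤ) : ℤ) : ℝ) * ε - h| ≤ (s : ℝ) * ε / 2 →
      ((z * s + k % (s : ℤ) : ℤ) : ℝ) * ε = y := by
  have hsε : (0:ℝ) < (s:ℝ) * ε := by positivity
  -- |y - x| < ε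
  have hyx : |y - x| < ε := by
    have hxε : x = (x / ε) * ε := by field_simp
    rcases hk with hk | hk
    · have h1 : (k:ℝ) ≤ x / ε := hk ▸ Int.floor_le _
      have h2 : x / ε - 1 < (k:ℝ) := by rw [hk]; exact Int.sub_one_lt_floor _
      rw [hy, abs_lt]
      constructor <;> nlinarith
    · have h1 : x / ε ≤ (k:ℝ) := hk ▸ Int.le_ceil _
      have h2 : (k:ℝ) < x / ε + 1 := by rw [hk]; exact Int.ceil_lt_add_one _
      rw [hy, abs_lt]
      constructor <;> nlinarith
  have hyh : |y - h| < ε + Δ' := by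
    calc |y - h| ≤ |y - x| + |x - h| := abs_sub_le _ _ _
      _ < ε + Δ' := by linarith
  have hhalf : ε + Δ' ≤ (s:ℝ) * ε / 2 := by linarith
  refine ⟨⟨k / s, ?_⟩, le_of_lt (lt_of_lt_of_le hyh hhalf), ?_⟩
  · have hdm : k / (s:ℤ) * s + k % s = k := by rw [mul_comm]; exact Int.mul_ediv_add_emod k s
    rw [hy, hdm]
  · intro z hz
    set p : ℝ := ((z * s + k % (s : ℤ) : ℤ) : ℝ) * ε with hp
    by_contra hne
    have hdm : k / (s:ℤ) * s + k % s = k := by rw [mul_comm]; exact Int.mul_ediv_add_emod k s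
    have hk' : (k:ℝ) * ε = ((k / s * s + k % s : ℤ) : ℝ) * ε := by rw [hdm]
    have hdiff : p - y = ((z - k / s : ℤ) : ℝ) * ((s:ℝ) * ε) := by
      rw [hp, hy, hk']
      push_cast
      ring
    have hzne : z - k / s ≠ 0 := by
      intro h0
      apply hne
      have : z = k / (s:ℤ) := by omega
      rw [hp, this, ← hk', hy]

    have h1le : (1:ℝ) ≤ |((z - k / s : ℤ) : ℝ)| := by
      rw [← Int.cast_abs]
      exact_mod_cast Int.one_le_abs hzne
    have hpy : (s:ℝ) * ε ≤ |p - y| := by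
      rw [hdiff, abs_mul, abs_of_pos hsε]
      nlinarith
    have : |p - y| ≤ |p - h| + |y - h| := by
      calc |p - y| ≤ |p - h| + |h - y| := abs_sub_le _ _ _
        _ = |p - h| + |y - h| := by rw [abs_sub_comm h y]
    linarith
end

section
/- Let $N$ clients have accumulated gradients $\tilde{g}_j^{(r)} = \sum_{c=0}^{\tau-1}\tilde{g}_j^{(c,r)}$, each $\tilde{g}_j^{(c,r)}$ unbiased for $g_j^{(c,r)}$ with variance at most $\sigma^2$ and independent across clients and steps. Suppose quantization is unbiased with $\mathbb{E}_Q\|Q(\tilde{g}_j^{(r)}) - \tilde{g}_j^{(r)}\|^2 \leq q(\alpha_j^r(D_j^r - 1) + 1)\|\tilde{g}_j^{(r)}\|^2$ where $\alpha_j^r \in \{0,1\}$, $D_j^r < t \leq 1$ when $\alpha_j^r = 1$, and $q = \frac{4d}{(s-2)^2}$. Then $\mathbb{E}_{Q,z}\big\|\frac{1}{N}\sum_{j=1}^N Q(\tilde{g}_j^{(r)})\big\|^2 \leq \frac{\tau\sigma^2}{N}\big(\frac{q}{N}\sum_{j=1}^N(\alpha_j^r(t-1)+1) + 1\big) + \frac{\tau}{N}\sum_{j=1}^N\big(\frac{q(\alpha_j^r(t-1)+1)}{N}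 + 1\big)\sum_{c=0}^{\tau-1}\|g_j^{(c,r)}\|^2$. -/
/-! For independent square-integrable random vectors in a Hilbert space the cross terms of
`E‖∑ Xᵢ‖²` factor into inner products of the means, so `E‖∑ Xᵢ‖² = ∑ E‖Xᵢ - EXᵢ‖² + ‖∑ EXᵢ‖²`.
Applied conditionally on the sampling randomness to the quantized gradients, whose conditional
means are the accumulated gradients `g̃ⱼ`, this bounds the inner expectation by
`∑ⱼ q(αⱼ(t-1)+1)‖g̃ⱼ‖² + ‖∑ⱼ g̃ⱼ‖²`. Applied once more to the independent stochastic gradients,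
and combined with `‖∑ᵢ vᵢ‖² ≤ n ∑ᵢ ‖vᵢ‖²`, it bounds `E‖g̃ⱼ‖²` and `E‖∑ⱼ g̃ⱼ‖²` by
`(number of summands) · (σ² + ∑ ‖g‖²)`; the claim is the resulting linear combination. -/

open MeasureTheory ProbabilityTheory
open scoped RealInnerProductSpace

theorem norm_sum_sq_le_card_mul {ι F : Type*} [Fintype ι] [SeminormedAddCommGroup F]
    (v : ι → F) : ‖∑ i, v i‖ ^ 2 ≤ Fintype.card ι * ∑ i, ‖v i‖ ^ 2 :=
  calc ‖∑ i, v i‖ ^ 2 ≤ (∑ i, ‖v i‖) ^ 2 := by gcongr; exact norm_sum_le _ _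
    _ ≤ _ := sq_sum_le_card_mul_sum_sq

theorem MeasureTheory.MemLp.prod_right_ae {α β F : Type*} [MeasurableSpace α]
    [MeasurableSpace β] [NormedAddCommGroup F] {μ : Measure α} {ν : Measure β}
    [SFinite μ] [SFinite ν] {f : α × β → F} (hf : MemLp f 2 (μ.prod ν)) :
    ∀ᵐ x ∂μ, MemLp (fun y => f (x, y)) 2 ν := by
  filter_upwards [hf.aestronglyMeasurable.prodMk_left,
    ((memLp_two_iff_integrable_sq_norm hf.aestronglyMeasurable).1 hf).prod_right_ae]
    with x hmeas hsq
  exact (memLp_two_iff_integrable_sq_norm hmeas).2 hsq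

section SecondMoment

variable {Ω E : Type*} [MeasurableSpace Ω] {μ : Measure Ω}
  [NormedAddCommGroup E] [InnerProductSpace ℝ E]

theorem MeasureTheory.MemLp.integrable_inner {X Y : Ω → E} (hX : MemLp X 2 μ)
    (hY : MemLp Y 2 μ) : Integrable (fun ω => ⟪X ω, Y ω⟫) μ :=
  (hX.norm.integrable_mul hY.norm).mono'
    (hX.aestronglyMeasurable.inner hY.aestronglyMeasurable)
    (ae_of_all _ fun _ => norm_inner_le_norm _ _)

variable [CompleteSpace E] [IsProbabilityMeasure μ]

theorem integral_norm_sub_integral_sq {X : Ω → E} (hX : MemLp X 2 μ) :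
    ∫ ω, ‖X ω - μ[X]‖ ^ 2 ∂μ = ∫ ω, ‖X ω‖ ^ 2 ∂μ - ‖μ[X]‖ ^ 2 := by
  have hsq : Integrable (fun ω => ‖X ω‖ ^ 2) μ := hX.norm.integrable_sq
  have hlin : Integrable (fun ω => 2 * ⟪X ω, μ[X]⟫) μ :=
    (hX.integrable_inner (memLp_const _)).const_mul 2
  have hcross : ∫ ω, ⟪X ω, μ[X]⟫ ∂μ = ‖μ[X]‖ ^ 2 := by
    simp_rw [real_inner_comm (μ[X])]
    rw [integral_inner (hX.integrable one_le_two), real_inner_self_eq_norm_sq]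
  simp_rw [norm_sub_sq_real]
  rw [integral_add (f := fun ω => ‖X ω‖ ^ 2 - 2 * ⟪X ω, μ[X]⟫) (hsq.sub hlin)
      (integrable_const _), integral_sub hsq hlin, integral_const_mul, hcross,
    integral_const, probReal_univ, one_smul]
  ring

variable [MeasurableSpace E] [BorelSpace E]

theorem integral_norm_sum_sq_eq {ι : Type*} [Fintype ι] {X : ι → Ω → E}
    (hX : ∀ i, MemLp (X i) 2 μ) (hindep : Pairwise fun i j => IndepFun (X i) (X j) μ) :
    ∫ ω, ‖∑ i, X i ω‖ ^ 2 ∂μ = ∑ i, ∫ ω, ‖X i ω - μ[X i]‖ ^ 2 ∂μ + ‖∑ i, μ[X i]‖ ^ 2 := by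
  classical
  have hexpand (Y : ι → E) : ‖∑ i, Y i‖ ^ 2 = ∑ i, ∑ j, ⟪Y i, Y j⟫ := by
    rw [← real_inner_self_eq_norm_sq, sum_inner]
    simp_rw [inner_sum]
  have hcross (i j : ι) : ∫ ω, ⟪X i ω, X j ω⟫ ∂μ - ⟪μ[X i], μ[X j]⟫
      = if i = j then ∫ ω, ‖X i ω - μ[X i]‖ ^ 2 ∂μ else 0 := by
    split_ifs with hij
    · subst hij
      simp_rw [real_inner_self_eq_norm_sq]
      rw [integral_norm_sub_integral_sq (hX i)]
    · exact sub_eq_zero.2 ((hindep hij).integral_bilin ((hX i).integrable one_le_two)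
        ((hX j).integrable one_le_two) (innerSL ℝ))
  calc ∫ ω, ‖∑ i, X i ω‖ ^ 2 ∂μ = ∑ i, ∑ j, ∫ ω, ⟪X i ω, X j ω⟫ ∂μ := by
        simp_rw [hexpand]
        rw [integral_finsetSum _ fun i _ => integrable_finsetSum _ fun j _ =>
          (hX i).integrable_inner (hX j)]
        simp_rw [integral_finsetSum _ fun j _ => (hX _).integrable_inner (hX j)]
    _ = ∑ i, ∑ j, (∫ ω, ⟪X i ω, X j ω⟫ ∂μ - ⟪μ[X i], μ[X j]⟫) + ‖∑ i, μ[X i]‖ ^ 2 := by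
        rw [hexpand]
        simp [Finset.sum_sub_distrib]
    _ = _ := by simp_rw [hcross]; simp

theorem integral_norm_sum_sq_le {ι : Type*} [Fintype ι] {X : ι → Ω → E} {m : ι → E}
    {v : ι → ℝ} (hX : ∀ i, MemLp (X i) 2 μ)
    (hindep : Pairwise fun i j => IndepFun (X i) (X j) μ) (hmean : ∀ i, μ[X i] = m i)
    (hvar : ∀ i, ∫ ω, ‖X i ω - m i‖ ^ 2 ∂μ ≤ v i) :
    ∫ ω, ‖∑ i, X i ω‖ ^ 2 ∂μ ≤ ∑ i, v i + ‖∑ i, m i‖ ^ 2 := by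
  rw [integral_norm_sum_sq_eq hX hindep]
  simp only [hmean]
  gcongr with i
  exact hvar i

theorem integral_norm_sum_sq_le_card_mul {ι : Type*} [Fintype ι] {X : ι → Ω → E}
    {m : ι → E} {v : ℝ} (hX : ∀ i, MemLp (X i) 2 μ)
    (hindep : Pairwise fun i j => IndepFun (X i) (X j) μ) (hmean : ∀ i, μ[X i] = m i)
    (hvar : ∀ i, ∫ ω, ‖X i ω - m i‖ ^ 2 ∂μ ≤ v) :
    ∫ ω, ‖∑ i, X i ω‖ ^ 2 ∂μ ≤ Fintype.card ι * v + Fintype.card ι * ∑ i, ‖m i‖ ^ 2 := by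
  refine (integral_norm_sum_sq_le hX hindep hmean hvar).trans ?_
  rw [Finset.sum_const, Finset.card_univ, nsmul_eq_mul]
  gcongr
  exact norm_sum_sq_le_card_mul m

theorem integral_integral_norm_sum_sq_le {Ω' : Type*} [MeasurableSpace Ω'] {ν : Measure Ω'}
    [IsProbabilityMeasure ν] {ι : Type*} [Fintype ι] {Y : ι → Ω → E} {Q : ι → Ω → Ω' → E}
    {w : ι → ℝ} (hY : ∀ i, MemLp (Y i) 2 μ)
    (hQ : ∀ i, MemLp (fun p : Ω × Ω' => Q i p.1 p.2) 2 (μ.prod ν))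
    (hindep : ∀ x, Pairwise fun i j => IndepFun (Q i x) (Q j x) ν)
    (hmean : ∀ i x, ∫ y, Q i x y ∂ν = Y i x)
    (hvar : ∀ i x, ∫ y, ‖Q i x y - Y i x‖ ^ 2 ∂ν ≤ w i * ‖Y i x‖ ^ 2) :
    ∫ x, ∫ y, ‖∑ i, Q i x y‖ ^ 2 ∂ν ∂μ
      ≤ ∑ i, w i * ∫ x, ‖Y i x‖ ^ 2 ∂μ + ∫ x, ‖∑ i, Y i x‖ ^ 2 ∂μ := by
  have hYsq (i : ι) : Integrable (fun x => ‖Y i x‖ ^ 2) μ := (hY i).norm.integrable_sq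
  have hweighted : Integrable (fun x => ∑ i, w i * ‖Y i x‖ ^ 2) μ :=
    integrable_finsetSum _ fun i _ => (hYsq i).const_mul _
  have hsum : Integrable (fun x => ‖∑ i, Y i x‖ ^ 2) μ :=
    (memLp_finsetSum _ fun i _ => hY i).norm.integrable_sq
  have hinner : ∀ᵐ x ∂μ, ∫ y, ‖∑ i, Q i x y‖ ^ 2 ∂ν
      ≤ ∑ i, w i * ‖Y i x‖ ^ 2 + ‖∑ i, Y i x‖ ^ 2 := by
    filter_upwards [ae_all_iff.2 fun i => (hQ i).prod_right_ae] with x hx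
    exact integral_norm_sum_sq_le hx (hindep x) (fun i => hmean i x) fun i => hvar i x
  calc ∫ x, ∫ y, ‖∑ i, Q i x y‖ ^ 2 ∂ν ∂μ
      ≤ ∫ x, (∑ i, w i * ‖Y i x‖ ^ 2 + ‖∑ i, Y i x‖ ^ 2) ∂μ :=
        integral_mono_of_nonneg (ae_of_all _ fun x => integral_nonneg fun _ => sq_nonneg _)
          (hweighted.add hsum) hinner
    _ = _ := by
        rw [integral_add hweighted hsum, integral_finsetSum _ fun i _ => (hYsq i).const_mul _]
        simp_rw [integral_const_mul]

end SecondMoment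

theorem side_information_weight_nonneg {α t : ℝ} (hα : α = 0 ∨ α = 1) (ht : 0 < t) :
    0 ≤ α * (t - 1) + 1 := by
  rcases hα with rfl | rfl <;> simp [ht.le]

theorem side_information_weight_le {α t D : ℝ} (hα : α = 0 ∨ α = 1) (hD : α = 1 → D < t) :
    α * (D - 1) + 1 ≤ α * (t - 1) + 1 := by
  rcases hα with rfl | rfl
  · simp
  · simpa using (hD rfl).le

theorem inv_sq_mul_weighted_sum_eq {ι : Type*} [Fintype ι] {n : ℝ} (hn : n ≠ 0) (a b : ℝ)
    (w S : ι → ℝ) :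
    (n ^ 2)⁻¹ * (∑ i, w i * (a + b * S i) + (n * a + n * b * ∑ i, S i))
      = a / n * ((∑ i, w i) / n + 1) + b / n * ∑ i, (w i / n + 1) * S i := by
  have hsplit : ∑ i, w i * (a + b * S i) = a * ∑ i, w i + b * ∑ i, w i * S i := by
    rw [Finset.mul_sum, Finset.mul_sum, ← Finset.sum_add_distrib]
    exact Finset.sum_congr rfl fun i _ => by ring
  have hsplit' : ∑ i, (w i / n + 1) * S i = (∑ i, w i * S i) / n + ∑ i, S i := by
    rw [Finset.sum_div, ← Finset.sum_add_distrib]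
    exact Finset.sum_congr rfl fun i _ => by ring
  rw [hsplit, hsplit']
  field_simp
  ring

theorem fedsi_quantized_average_bound_general
    {Ωz ΩQ : Type*} [MeasurableSpace Ωz] [MeasurableSpace ΩQ]
    (μz : Measure Ωz) (μQ : Measure ΩQ)
    [IsProbabilityMeasure μz] [IsProbabilityMeasure μQ]
    (d N τ : ℕ) (hN : 0 < N) (s : ℕ) (σ t q : ℝ) (ht : 0 < t)
    (hq : q = 4 * d / ((s : ℝ) - 2) ^ 2)
    (gt : Fin N → Fin τ → Ωz → EuclideanSpace ℝ (Fin d))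
    (g : Fin N → Fin τ → EuclideanSpace ℝ (Fin d))
    (Qg : Fin N → Ωz → ΩQ → EuclideanSpace ℝ (Fin d))
    (α : Fin N → ℝ) (hα : ∀ j, α j = 0 ∨ α j = 1)
    (D : Fin N → Ωz → ℝ) (hDt : ∀ j z, α j = 1 → D j z < t)
    -- stochastic gradients: square-integrable, unbiased, variance at most σ²,
    -- independent across clients and local steps
    (hgL2 : ∀ j c, MemLp (gt j c) 2 μz)
    (hgindep : iIndepFun
      (fun (p : Fin N × Fin τ) => gt p.1 p.2) μz)
    (hgmean : ∀ j c, ∫ z, gt j c z ∂μz = g j c)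
    (hgvar : ∀ j c, ∫ z, ‖gt j c z - g j c‖ ^ 2 ∂μz ≤ σ ^ 2)
    -- quantizer: jointly square-integrable, unbiased given the sampled gradients,
    -- relative variance bound with side information, independent across clients
    (hQL2 : ∀ j, MemLp (fun p : Ωz × ΩQ => Qg j p.1 p.2) 2 (μz.prod μQ))
    (hQindep : ∀ z, iIndepFun (fun j => Qg j z) μQ)
    (hQmean : ∀ j z, ∫ ωQ, Qg j z ωQ ∂μQ = ∑ c, gt j c z)
    (hQvar : ∀ j z, ∫ ωQ, ‖Qg j z ωQ - ∑ c, gt j c z‖ ^ 2 ∂μQ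
      ≤ q * (α j * (D j z - 1) + 1) * ‖∑ c, gt j c z‖ ^ 2) :
    ∫ z, ∫ ωQ, ‖(N : ℝ)⁻¹ • ∑ j, Qg j z ωQ‖ ^ 2 ∂μQ ∂μz
      ≤ (τ : ℝ) * σ ^ 2 / N * (q / N * (∑ j, (α j * (t - 1) + 1)) + 1)
        + (τ : ℝ) / N * ∑ j, (q * (α j * (t - 1) + 1) / N + 1)
            * ∑ c, ‖g j c‖ ^ 2 := by
  have hq0 : 0 ≤ q := hq ▸ by positivity
  have hclient (j : Fin N) :
      ∫ z, ‖∑ c, gt j c z‖ ^ 2 ∂μz ≤ τ * σ ^ 2 + τ * ∑ c, ‖g j c‖ ^ 2 := by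
    simpa using integral_norm_sum_sq_le_card_mul (hgL2 j)
      (fun c c' hcc' => hgindep.indepFun (i := (j, c)) (j := (j, c')) (by simpa using hcc'))
      (hgmean j) (hgvar j)
  have htotal : ∫ z, ‖∑ j, ∑ c, gt j c z‖ ^ 2 ∂μz
      ≤ N * (τ * σ ^ 2) + N * τ * ∑ j, ∑ c, ‖g j c‖ ^ 2 := by
    have := integral_norm_sum_sq_le_card_mul (X := fun p : Fin N × Fin τ => gt p.1 p.2)
      (fun p => hgL2 p.1 p.2) (fun p p' h => hgindep.indepFun h) (fun p => hgmean p.1 p.2)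
      (fun p => hgvar p.1 p.2)
    simp_rw [Fintype.sum_prod_type, Fintype.card_prod, Fintype.card_fin, Nat.cast_mul] at this
    exact this.trans_eq (by ring)
  simp_rw [norm_smul, mul_pow, norm_inv, RCLike.norm_natCast, inv_pow, integral_const_mul]
  calc ((N : ℝ) ^ 2)⁻¹ * (∫ z, ∫ ωQ, ‖∑ j, Qg j z ωQ‖ ^ 2 ∂μQ ∂μz)
      ≤ ((N : ℝ) ^ 2)⁻¹ * (∑ j, q * (α j * (t - 1) + 1) * ∫ z, ‖∑ c, gt j c z‖ ^ 2 ∂μz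
        + ∫ z, ‖∑ j, ∑ c, gt j c z‖ ^ 2 ∂μz) := by
        gcongr
        exact integral_integral_norm_sum_sq_le (fun j => memLp_finsetSum _ fun c _ => hgL2 j c)
          hQL2 (fun z _ _ hjk => (hQindep z).indepFun hjk) hQmean fun j z => (hQvar j z).trans
            (by gcongr q * ?_ * _; exact side_information_weight_le (hα j) (hDt j z))
    _ ≤ ((N : ℝ) ^ 2)⁻¹ * (∑ j, q * (α j * (t - 1) + 1) * (τ * σ ^ 2 + τ * ∑ c, ‖g j c‖ ^ 2)
        + (N * (τ * σ ^ 2) + N * τ * ∑ j, ∑ c, ‖g j c‖ ^ 2)) := by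
        gcongr with j
        · exact mul_nonneg hq0 (side_information_weight_nonneg (hα j) ht)
        · exact hclient j
    _ = _ := by
        rw [inv_sq_mul_weighted_sum_eq (Nat.cast_ne_zero.2 hN.ne'), ← Finset.mul_sum _ _ q]
        ring

/-- Lemma 1 of the paper: second-moment bound for the quantized average of accumulated
local stochastic gradients in FedSI.  The sampling randomness lives on `(Ωz, μz)` and
the quantization randomness on `(ΩQ, μQ)`.  Client `j` accumulates
`g̃_j = ∑_{c<τ} g̃_j⁽ᶜ⁾`, where the `g̃_j⁽ᶜ⁾` are unbiased for `g_j⁽ᶜ⁾` with variance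
at most `σ²` and independent across clients and steps.  The quantizer is unbiased
with `E_Q‖Q(g̃_j) - g̃_j‖² ≤ q(α_j(D_j - 1) + 1)‖g̃_j‖²` where `q = 4d/(s-2)²`,
`α_j ∈ {0,1}` and `D_j < t ≤ 1` whenever `α_j = 1`, and quantizations are independent
across clients.  Then
`E_{Q,z}‖(1/N)∑_j Q(g̃_j)‖² ≤ (τσ²/N)((q/N)∑_j(α_j(t-1)+1) + 1)
  + (τ/N)∑_j((q(α_j(t-1)+1))/N + 1)∑_{c<τ}‖g_j⁽ᶜ⁾‖²`. -/
theorem fedsi_quantized_average_bound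
    {Ωz ΩQ : Type*} [MeasurableSpace Ωz] [MeasurableSpace ΩQ]
    (μz : Measure Ωz) (μQ : Measure ΩQ)
    [IsProbabilityMeasure μz] [IsProbabilityMeasure μQ]
    (d N τ : ℕ) (hN : 0 < N) (s : ℕ) (hs : 2 < s) (σ t q : ℝ) (ht : 0 < t) (ht1 : t ≤ 1)
    (hq : q = 4 * d / ((s : ℝ) - 2) ^ 2)
    (gt : Fin N → Fin τ → Ωz → EuclideanSpace ℝ (Fin d))
    (g : Fin N → Fin τ → EuclideanSpace ℝ (Fin d))
    (Qg : Fin N → Ωz → ΩQ → EuclideanSpace ℝ (Fin d))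
    (α : Fin N → ℝ) (hα : ∀ j, α j = 0 ∨ α j = 1)
    (D : Fin N → Ωz → ℝ) (hD : ∀ j z, 0 ≤ D j z) (hDt : ∀ j z, α j = 1 → D j z < t)
    -- stochastic gradients: square-integrable, unbiased, variance at most σ²,
    -- independent across clients and local steps
    (hgL2 : ∀ j c, MemLp (gt j c) 2 μz)
    (hgmeas : ∀ j c, Measurable (gt j c))
    (hgindep : iIndepFun
      (fun (p : Fin N × Fin τ) => gt p.1 p.2) μz)
    (hgmean : ∀ j c, ∫ z, gt j c z ∂μz = g j c)
    (hgvar : ∀ j c, ∫ z, ‖gt j c z - g j c‖ ^ 2 ∂μz ≤ σ ^ 2)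
    -- quantizer: jointly square-integrable, unbiased given the sampled gradients,
    -- relative variance bound with side information, independent across clients
    (hQL2 : ∀ j, MemLp (fun p : Ωz × ΩQ => Qg j p.1 p.2) 2 (μz.prod μQ))
    (hQmeas : ∀ j z, Measurable (Qg j z))
    (hQindep : ∀ z, iIndepFun (fun j => Qg j z) μQ)
    (hQmean : ∀ j z, ∫ ωQ, Qg j z ωQ ∂μQ = ∑ c, gt j c z)
    (hQvar : ∀ j z, ∫ ωQ, ‖Qg j z ωQ - ∑ c, gt j c z‖ ^ 2 ∂μQ
      ≤ q * (α j * (D j z - 1) + 1) * ‖∑ c, gt j c z‖ ^ 2) :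
    ∫ z, ∫ ωQ, ‖(N : ℝ)⁻¹ • ∑ j, Qg j z ωQ‖ ^ 2 ∂μQ ∂μz
      ≤ (τ : ℝ) * σ ^ 2 / N * (q / N * (∑ j, (α j * (t - 1) + 1)) + 1)
        + (τ : ℝ) / N * ∑ j, (q * (α j * (t - 1) + 1) / N + 1)
            * ∑ c, ‖g j c‖ ^ 2 :=
  fedsi_quantized_average_bound_general μz μQ d N τ hN s σ t q ht hq gt g Qg α hα D hDt hgL2 hgindep
    hgmean hgvar hQL2 hQindep hQmean hQvar
end
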